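/- arXiv:2509.23814 — 4 statements merged into one kernel-verified Lean document; each statement's English description precedes it below -/
import Mathlib

section
/- For a real number g, the inequality 1 − (4g/3)·cos θ + (g/3)·cos 2θ ≥ 0 holds for every θ ∈ ℝ if and only if −3/5 ≤ g ≤ 1. -/
/-- Lemma 6.3: the (2,0) density `1 − (4g/3)cos θ + (g/3)cos 2θ` is nonnegative on ℝ
iff `−3/5 ≤ g ≤ 1`. -/
theorem statement10 (g : ℝ) :
    (∀ θ : ℝ, 0 ≤ 1 - (4 * g / 3) * Real.cos θ + (g / 3) * Real.cos (2 * θ)) ↔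
      (-3 / 5 ≤ g ∧ g ≤ 1) := by
  constructor
  · intro h
    have h0 := h 0
    have hpi := h Real.pi
    simp [Real.cos_two_mul] at h0 hpi
    constructor <;> nlinarith
  · rintro ⟨h1, h2⟩ θ
    have hc1 := Real.neg_one_le_cos θ
    have hc2 := Real.cos_le_one θ
    rw [Real.cos_two_mul]
    rcases le_or_gt 0 g with hg | hg
    · nlinarith [sq_nonneg (Real.cos θ - 1)]
    · nlinarith [mul_nonneg (mul_nonneg (neg_nonneg.2 hg.le) (sub_nonneg.2 hc2)) (sub_nonneg.2 hc1),
        sq_nonneg (Real.cos θ - 1)]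
end

section
/- The Kullback–Leibler divergence of μ^{1,0} with respect to UNIF equals 1 − log 2; equivalently, ∫₀^{2π} (1−cos θ)·log(1−cos θ) dθ/(2π) = 1 − log 2. -/
/-! The density is `f θ = 1 - cos θ`, so the divergence is the circle average of `f log f`. Write
`f log f = log f + (1 + cos θ) - (cos θ · log f + 1 + cos θ)`. Since `1 - cos θ = 2 sin² (θ/2)`,
the average of `log f` is `-log 2` by `∫₀^π log sin = -π log 2`. The last term is the derivative
of `sin θ · log (1 - cos θ)`, which is continuous on `[0, 2π]` (it behaves like `θ log θ²` near
the endpoints) and vanishes at both ends, so it averages to `0`; and `1 + cos θ` averages to `1`. -/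

open MeasureTheory Complex Filter Topology intervalIntegral
open scoped ENNReal Real

noncomputable section

/-- Normalized arclength (uniform) probability measure on the unit circle 𝕋 ⊆ ℂ. -/
def UNIF : Measure ℂ :=
  (ENNReal.ofReal (2 * Real.pi))⁻¹ •
    (volume.restrict (Set.Ico (0 : ℝ) (2 * Real.pi))).map
      (fun θ : ℝ => Complex.exp (θ * Complex.I))

open Classical in
/-- Kullback–Leibler divergence 𝒦(ν|μ) ∈ [0,∞]. -/
def KL (ν μ : Measure ℂ) : ℝ≥0∞ :=
  if ν ≪ μ ∧ Integrable (fun z => Real.log ((ν.rnDeriv μ) z).toReal) ν then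
    ENNReal.ofReal (∫ z, Real.log ((ν.rnDeriv μ) z).toReal ∂ν)
  else ⊤

/-- Measure with density `1 − g cos θ` with respect to UNIF (z = e^{iθ}). -/
def mu10 (g : ℝ) : Measure ℂ :=
  UNIF.withDensity fun z => ENNReal.ofReal (1 - g * Real.cos z.arg)

/-- Measure with density `1 − g cos 2θ` with respect to UNIF (z = e^{iθ}). -/
def mu11 (g : ℝ) : Measure ℂ :=
  UNIF.withDensity fun z => ENNReal.ofReal (1 - g * Real.cos (2 * z.arg))

/-- Measure with density `1 − (4g/3) cos θ + (g/3) cos 2θ` with respect to UNIF (z = e^{iθ}). -/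
def mu20 (g : ℝ) : Measure ℂ :=
  UNIF.withDensity fun z =>
    ENNReal.ofReal (1 - (4 * g / 3) * Real.cos z.arg + (g / 3) * Real.cos (2 * z.arg))

lemma one_sub_cos_eq_two_mul_sin_sq (θ : ℝ) : 1 - Real.cos θ = 2 * Real.sin (θ / 2) ^ 2 := by
  rw [Real.sin_sq_eq_half_sub, mul_div_cancel₀ θ two_ne_zero]
  ring

lemma intervalIntegrable_log_one_sub_cos (a b : ℝ) :
    IntervalIntegrable (fun θ => Real.log (1 - Real.cos θ)) volume a b :=
  (analyticOnNhd_const.sub Real.analyticOnNhd_cos :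
    AnalyticOnNhd ℝ (fun θ => 1 - Real.cos θ) _).meromorphicOn.intervalIntegrable_log

lemma integral_log_one_sub_cos :
    ∫ θ in (0 : ℝ)..(2 * π), Real.log (1 - Real.cos θ) = -(2 * π * Real.log 2) := by
  calc ∫ θ in (0 : ℝ)..(2 * π), Real.log (1 - Real.cos θ)
      = 2 * ∫ x in (0 : ℝ)..π, Real.log (1 - Real.cos (2 * x)) := by
        rw [intervalIntegral.integral_comp_mul_left (fun θ => Real.log (1 - Real.cos θ))
          two_ne_zero]
        simp
    _ = 2 * ∫ x in (0 : ℝ)..π, (Real.log 2 + 2 * Real.log (Real.sin x)) := by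
        congr 1
        refine intervalIntegral.integral_congr_Ioo_of_le Real.pi_pos.le fun x hx => ?_
        have hsin : Real.sin x ≠ 0 := (Real.sin_pos_of_pos_of_lt_pi hx.1 hx.2).ne'
        rw [one_sub_cos_eq_two_mul_sin_sq, mul_div_cancel_left₀ x two_ne_zero,
          Real.log_mul two_ne_zero (pow_ne_zero 2 hsin), Real.log_pow]
        push_cast; ring
    _ = -(2 * π * Real.log 2) := by
        have hlog_sin : IntervalIntegrable (fun x => 2 * Real.log (Real.sin x)) volume 0 π :=
          intervalIntegrable_log_sin.const_mul 2
        rw [intervalIntegral.integral_add intervalIntegrable_const hlog_sin,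
          intervalIntegral.integral_const_mul]
        simp only [intervalIntegral.integral_const, sub_zero, smul_eq_mul]
        rw [show (∫ x in (0 : ℝ)..π, Real.log (Real.sin x)) = -Real.log 2 * π from
          integral_log_sin_zero_pi]
        ring

lemma sin_mul_log_one_sub_cos (θ : ℝ) :
    Real.sin θ * Real.log (1 - Real.cos θ) = Real.sin θ * Real.log 2
      + 4 * Real.cos (θ / 2) * (Real.sin (θ / 2) * Real.log (Real.sin (θ / 2))) := by
  rcases eq_or_ne (Real.sin (θ / 2)) 0 with hs | hs
  -- here `1 - cos θ = 0` and both sides vanish, using the convention `log 0 = 0`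
  · have : Real.sin θ = 0 := by
      rw [show θ = 2 * (θ / 2) by ring, Real.sin_two_mul, hs]; ring
    simp [this, hs]
  · rw [one_sub_cos_eq_two_mul_sin_sq, Real.log_mul two_ne_zero (pow_ne_zero 2 hs),
      Real.log_pow, show θ = 2 * (θ / 2) by ring, Real.sin_two_mul]
    push_cast
    ring_nf

lemma continuous_sin_mul_log_one_sub_cos :
    Continuous fun θ => Real.sin θ * Real.log (1 - Real.cos θ) := by
  simp_rw [sin_mul_log_one_sub_cos]
  have := Real.continuous_mul_log.comp (Real.continuous_sin.comp (continuous_id.div_const 2))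
  fun_prop

lemma hasDerivAt_sin_mul_log_one_sub_cos {θ : ℝ} (h : Real.cos θ ≠ 1) :
    HasDerivAt (fun θ => Real.sin θ * Real.log (1 - Real.cos θ))
      (Real.cos θ * Real.log (1 - Real.cos θ) + 1 + Real.cos θ) θ := by
  have h1 : 1 - Real.cos θ ≠ 0 := sub_ne_zero.mpr h.symm
  have hlog : HasDerivAt (fun θ => Real.log (1 - Real.cos θ))
      (Real.sin θ / (1 - Real.cos θ)) θ := by
    simpa using ((Real.hasDerivAt_cos θ).const_sub 1).log h1
  refine ((Real.hasDerivAt_sin θ).mul hlog).congr_deriv ?_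
  rw [mul_div_assoc', ← sq, Real.sin_sq,
    show 1 - Real.cos θ ^ 2 = (1 - Real.cos θ) * (1 + Real.cos θ) by ring,
    mul_div_cancel_left₀ _ h1]
  ring

lemma integral_cos_mul_log_one_sub_cos_add :
    ∫ θ in (0 : ℝ)..(2 * π), (Real.cos θ * Real.log (1 - Real.cos θ) + 1 + Real.cos θ) = 0 := by
  rw [intervalIntegral.integral_eq_sub_of_hasDerivAt_of_le (by positivity)
    continuous_sin_mul_log_one_sub_cos.continuousOn]
  · simp
  · intro θ hθ
    refine hasDerivAt_sin_mul_log_one_sub_cos fun h => hθ.1.ne' ?_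
    exact (Real.cos_eq_one_iff_of_lt_of_lt (by linarith [hθ.1, Real.pi_pos]) hθ.2).mp h
  · exact (((intervalIntegrable_log_one_sub_cos 0 (2 * π)).continuousOn_mul
      Real.continuous_cos.continuousOn).add intervalIntegrable_const).add
      (Real.continuous_cos.intervalIntegrable _ _)

theorem integral_one_sub_cos_mul_log_one_sub_cos :
    ∫ θ in (0 : ℝ)..(2 * π), (1 - Real.cos θ) * Real.log (1 - Real.cos θ)
      = 2 * π * (1 - Real.log 2) := by
  have hL := intervalIntegrable_log_one_sub_cos 0 (2 * π)
  have hcos : IntervalIntegrable Real.cos volume 0 (2 * π) :=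
    Real.continuous_cos.intervalIntegrable _ _
  have hG : IntervalIntegrable
      (fun θ => Real.cos θ * Real.log (1 - Real.cos θ) + 1 + Real.cos θ) volume 0 (2 * π) :=
    ((hL.continuousOn_mul Real.continuous_cos.continuousOn).add intervalIntegrable_const).add hcos
  calc ∫ θ in (0 : ℝ)..(2 * π), (1 - Real.cos θ) * Real.log (1 - Real.cos θ)
      = ∫ θ in (0 : ℝ)..(2 * π), (Real.log (1 - Real.cos θ) + 1 + Real.cos θ
          - (Real.cos θ * Real.log (1 - Real.cos θ) + 1 + Real.cos θ)) := by
        congr 1; ext θ; ring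
    _ = (∫ θ in (0 : ℝ)..(2 * π), Real.log (1 - Real.cos θ)) + 2 * π := by
        rw [intervalIntegral.integral_sub ((hL.add intervalIntegrable_const).add hcos) hG,
          integral_cos_mul_log_one_sub_cos_add, intervalIntegral.integral_add
          (hL.add intervalIntegrable_const) hcos, intervalIntegral.integral_add hL
          intervalIntegrable_const]
        simp
    _ = 2 * π * (1 - Real.log 2) := by
        rw [integral_log_one_sub_cos]; ring

lemma measurable_exp_ofReal_mul_I : Measurable fun θ : ℝ => Complex.exp (θ * Complex.I) := by
  fun_prop

lemma cos_arg_exp_ofReal_mul_I (θ : ℝ) :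
    Real.cos (Complex.exp (θ * Complex.I)).arg = Real.cos θ := by
  rw [Complex.cos_arg (Complex.exp_ne_zero _), Complex.norm_exp_ofReal_mul_I,
    Complex.exp_ofReal_mul_I_re, div_one]

instance : IsProbabilityMeasure UNIF := by
  constructor
  rw [UNIF, Measure.smul_apply, Measure.map_apply measurable_exp_ofReal_mul_I MeasurableSet.univ,
    Set.preimage_univ, Measure.restrict_apply_univ, Real.volume_Ico, smul_eq_mul, sub_zero]
  exact ENNReal.inv_mul_cancel (by positivity) ENNReal.ofReal_ne_top

lemma integrable_UNIF_iff {g : ℂ → ℝ} (hg : Measurable g) :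
    Integrable g UNIF ↔
      IntegrableOn (fun θ : ℝ => g (Complex.exp (θ * Complex.I))) (Set.Ico 0 (2 * π)) := by
  rw [UNIF, integrable_smul_measure (ENNReal.inv_ne_zero.mpr ENNReal.ofReal_ne_top)
    (ENNReal.inv_ne_top.mpr (by positivity)),
    integrable_map_measure hg.aestronglyMeasurable measurable_exp_ofReal_mul_I.aemeasurable]
  rfl

lemma integral_UNIF {g : ℂ → ℝ} (hg : Measurable g) :
    ∫ z, g z ∂UNIF = (2 * π)⁻¹ * ∫ θ in (0 : ℝ)..(2 * π), g (Complex.exp (θ * Complex.I)) := by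
  rw [UNIF, MeasureTheory.integral_smul_measure,
    integral_map measurable_exp_ofReal_mul_I.aemeasurable hg.aestronglyMeasurable,
    intervalIntegral.integral_of_le (by positivity), integral_Ico_eq_integral_Ioo,
    integral_Ioc_eq_integral_Ioo, smul_eq_mul, ENNReal.toReal_inv,
    ENNReal.toReal_ofReal (by positivity)]

theorem KL_withDensity_ofReal {μ : Measure ℂ} [SigmaFinite μ] {f : ℂ → ℝ} (hf : Measurable f)
    (hf0 : ∀ z, 0 ≤ f z) (hint : Integrable (fun z => f z * Real.log (f z)) μ) :
    KL (μ.withDensity fun z => ENNReal.ofReal (f z)) μ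
      = ENNReal.ofReal (∫ z, f z * Real.log (f z) ∂μ) := by
  set ν := μ.withDensity fun z => ENNReal.ofReal (f z)
  have hν : ν ≪ μ := withDensity_absolutelyContinuous _ _
  have hrn : (fun z => Real.log (ν.rnDeriv μ z).toReal) =ᵐ[ν] fun z => Real.log (f z) := by
    refine hν.ae_le ?_
    filter_upwards [Measure.rnDeriv_withDensity μ hf.ennreal_ofReal] with z hz
    rw [hz, ENNReal.toReal_ofReal (hf0 z)]
  have hint' : Integrable (fun z => Real.log (f z)) ν := by
    rw [integrable_withDensity_iff hf.ennreal_ofReal (.of_forall fun _ => ENNReal.ofReal_lt_top)]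
    simpa only [ENNReal.toReal_ofReal (hf0 _), mul_comm] using hint
  rw [KL, if_pos ⟨hν, hint'.congr hrn.symm⟩, integral_congr_ae hrn,
    integral_withDensity_eq_integral_toReal_smul hf.ennreal_ofReal
      (.of_forall fun _ => ENNReal.ofReal_lt_top)]
  simp only [ENNReal.toReal_ofReal (hf0 _), smul_eq_mul]

/-- 𝒦(μ^{1,0} | UNIF) = 1 − log 2. -/
theorem statement11 :
    KL (mu10 1) UNIF = ENNReal.ofReal (1 - Real.log 2) ∧
    (1 / (2 * Real.pi)) * ∫ θ in (0 : ℝ)..(2 * Real.pi),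
        (1 - Real.cos θ) * Real.log (1 - Real.cos θ) = 1 - Real.log 2 := by
  set f : ℂ → ℝ := fun z => 1 - 1 * Real.cos z.arg
  have hf : Measurable f := by fun_prop
  have hflogf : Measurable fun z => f z * Real.log (f z) := hf.mul hf.log
  have hf0 : ∀ z, 0 ≤ f z := fun z => by linarith [Real.cos_le_one z.arg]
  have hpull : ∀ θ : ℝ,
      f (Complex.exp (θ * Complex.I)) * Real.log (f (Complex.exp (θ * Complex.I)))
        = (1 - Real.cos θ) * Real.log (1 - Real.cos θ) := fun θ => by
    simp only [f, cos_arg_exp_ofReal_mul_I, one_mul]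
  have hint : Integrable (fun z => f z * Real.log (f z)) UNIF := by
    rw [integrable_UNIF_iff hflogf]
    simp only [hpull]
    exact (Real.continuous_mul_log.comp (continuous_const.sub Real.continuous_cos)).integrableOn_Icc
      |>.mono_set Set.Ico_subset_Icc_self
  have hmean : (1 / (2 * π)) * ∫ θ in (0 : ℝ)..(2 * π),
      (1 - Real.cos θ) * Real.log (1 - Real.cos θ) = 1 - Real.log 2 := by
    rw [integral_one_sub_cos_mul_log_one_sub_cos]
    field_simp
  refine ⟨?_, hmean⟩
  rw [mu10, KL_withDensity_ofReal hf hf0 hint, integral_UNIF hflogf]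
  simp only [hpull]
  rw [← hmean, one_div]

end
end

section
/- For every real g with |g| ≤ 1, ∫₀^{2π} (1−g·cos θ)·log(1−g·cos θ) dθ/(2π) = 1 − √(1−g²) + log((1+√(1−g²))/2). -/
/-!
For `|g| < 1` put `s = √(1 - g²)` and `a = g / (1 + s)`, so that `|a| < 1` and
`1 - g cos θ = (1 + s) / 2 · |e^{iθ} - a|²`. The mean of `log |e^{iθ} - a|²` over the circle
vanishes, and an integration by parts turns the mean of `cos θ · log |e^{iθ} - a|²` into
`-a` times the mean of `2 sin² θ / |e^{iθ} - a|²`, which is `1` by the Poisson integral formula.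
Since `g a = 1 - s`, this gives the formula for `|g| < 1`; both sides are continuous in `g`
(the integrand `x log x` is continuous at `0`), so it persists at `|g| = 1`.
-/

open MeasureTheory intervalIntegral Real

lemma norm_circleMap_sub_ofReal_sq (a θ : ℝ) :
    ‖circleMap 0 1 θ - a‖ ^ 2 = 1 - 2 * a * cos θ + a ^ 2 := by
  rw [← Complex.normSq_eq_norm_sq, Complex.normSq_apply]
  simp only [Complex.sub_re, Complex.sub_im, circleMap_zero_re, circleMap_zero_im,
    Complex.ofReal_re, Complex.ofReal_im]
  linear_combination sin_sq_add_cos_sq θ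

lemma one_sub_two_mul_cos_add_sq_pos {a : ℝ} (ha : |a| < 1) (θ : ℝ) :
    0 < 1 - 2 * a * cos θ + a ^ 2 := by
  have : a * cos θ ≤ |a| := (le_abs_self _).trans <| by
    rw [abs_mul]; exact mul_le_of_le_one_right (abs_nonneg a) (abs_cos_le_one θ)
  nlinarith [sq_abs a]

lemma integral_log_one_sub_two_mul_cos_add_sq (a : ℝ) :
    ∫ θ in 0..2 * π, log (1 - 2 * a * cos θ + a ^ 2) = 4 * π * log⁺ |a| := by
  have h := circleAverage_log_norm_sub_const_eq_posLog (a := (a : ℂ))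
  rw [circleAverage_def, smul_eq_mul, Complex.norm_real, norm_eq_abs] at h
  simp_rw [← norm_circleMap_sub_ofReal_sq, log_pow, intervalIntegral.integral_const_mul]
  rw [← h]
  field_simp
  ring

lemma poissonKernel_circleMap (a θ : ℝ) :
    poissonKernel 0 a (circleMap 0 1 θ) = (1 - a ^ 2) / (1 - 2 * a * cos θ + a ^ 2) := by
  simp [poissonKernel_def, norm_circleMap_sub_ofReal_sq]

/-- Poisson integral formula for `(1 - z²) / 2`, whose real part on the unit circle
is `sin² θ`. -/
lemma integral_sin_sq_div_one_sub_two_mul_cos_add_sq {a : ℝ} (ha : |a| < 1) :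
    ∫ θ in 0..2 * π, sin θ ^ 2 / (1 - 2 * a * cos θ + a ^ 2) = π := by
  set f : ℂ → ℂ := fun z => (1 - z ^ 2) / 2
  have hf : Differentiable ℂ f := by fun_prop
  have ha' : (a : ℂ) ∈ Metric.ball 0 1 := by simpa using ha
  have hint : CircleIntegrable (poissonKernel 0 a • f) 0 1 := by
    rw [poissonKernel_eq_re_herglotzRieszKernel]
    exact ((Complex.continuous_re.comp_continuousOn
      (continuousOn_herglotzRieszKernel_sphere ha')).smul
        hf.continuous.continuousOn).circleIntegrable'
  have hf_re : ∀ θ : ℝ, (f (circleMap 0 1 θ)).re = sin θ ^ 2 := by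
    intro θ
    simp only [f, circleMap_zero_pow, one_pow, Nat.cast_ofNat, Complex.div_ofNat_re,
      Complex.sub_re, Complex.one_re, circleMap_zero_re, one_mul, cos_two_mul, cos_sq']
    ring
  have hpt : ∀ θ : ℝ, (Complex.reCLM ∘ (poissonKernel 0 a • f)) (circleMap 0 1 θ) =
      (1 - a ^ 2) * (sin θ ^ 2 / (1 - 2 * a * cos θ + a ^ 2)) := by
    intro θ
    rw [Function.comp_apply, Pi.smul_apply', Complex.reCLM_apply, Complex.smul_re, hf_re,
      poissonKernel_circleMap, smul_eq_mul]
    ring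
  have hfa : (f a).re = (1 - a ^ 2) / 2 := by simp [f, ← Complex.ofReal_pow]
  have hpoisson := congrArg Complex.re (hf.diffContOnCl.circleAverage_poissonKernel_smul ha')
  rw [← Complex.reCLM_apply, ← Complex.reCLM.circleAverage_comp_comm hint,
    circleAverage_def] at hpoisson
  simp_rw [hpt, intervalIntegral.integral_const_mul, smul_eq_mul, hfa] at hpoisson
  have ha2 : 1 - a ^ 2 ≠ 0 := by nlinarith [abs_nonneg a, sq_abs a]
  field_simp at hpoisson
  exact hpoisson

lemma integral_cos_mul_log_one_sub_two_mul_cos_add_sq {a : ℝ} (ha : |a| < 1) :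
    ∫ θ in 0..2 * π, cos θ * log (1 - 2 * a * cos θ + a ^ 2) = -(2 * π * a) := by
  have hQ : ∀ θ, HasDerivAt (fun t => 1 - 2 * a * cos t + a ^ 2) (2 * a * sin θ) θ := by
    intro θ
    simpa using (((hasDerivAt_cos θ).const_mul (2 * a)).const_sub 1).add_const (a ^ 2)
  have hlogQ : ∀ θ, HasDerivAt (fun t => log (1 - 2 * a * cos t + a ^ 2))
      (2 * a * sin θ / (1 - 2 * a * cos θ + a ^ 2)) θ :=
    fun θ => (hQ θ).log (one_sub_two_mul_cos_add_sq_pos ha θ).ne'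
  have hcont : Continuous fun θ => 2 * a * sin θ / (1 - 2 * a * cos θ + a ^ 2) :=
    by fun_prop (disch := exact fun θ => (one_sub_two_mul_cos_add_sq_pos ha θ).ne')
  have hparts := intervalIntegral.integral_mul_deriv_eq_deriv_mul (fun θ _ => hlogQ θ)
    (fun θ _ => hasDerivAt_sin θ) (hcont.intervalIntegrable 0 (2 * π))
    (continuous_cos.intervalIntegrable 0 (2 * π))
  simp only [sin_zero, sin_two_pi, mul_zero, sub_zero, zero_sub] at hparts
  calc ∫ θ in 0..2 * π, cos θ * log (1 - 2 * a * cos θ + a ^ 2)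
      = ∫ θ in 0..2 * π, log (1 - 2 * a * cos θ + a ^ 2) * cos θ := by simp_rw [mul_comm]
    _ = -(2 * a * ∫ θ in 0..2 * π, sin θ ^ 2 / (1 - 2 * a * cos θ + a ^ 2)) := by
      rw [hparts, ← intervalIntegral.integral_const_mul]
      congr 2; ext θ; ring
    _ = -(2 * π * a) := by rw [integral_sin_sq_div_one_sub_two_mul_cos_add_sq ha]; ring

lemma integral_one_sub_mul_cos (b : ℝ) : ∫ θ in 0..2 * π, (1 - b * cos θ) = 2 * π := by
  rw [intervalIntegral.integral_sub intervalIntegrable_const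
    (continuous_cos.intervalIntegrable _ _ |>.const_mul b), intervalIntegral.integral_const_mul]
  simp

lemma integral_one_sub_mul_cos_mul_log {a : ℝ} (ha : |a| < 1) (b : ℝ) :
    ∫ θ in 0..2 * π, (1 - b * cos θ) * log (1 - 2 * a * cos θ + a ^ 2) =
      2 * π * (a * b) := by
  have hlog : Continuous fun θ => log (1 - 2 * a * cos θ + a ^ 2) :=
    by fun_prop (disch := exact fun θ => (one_sub_two_mul_cos_add_sq_pos ha θ).ne')
  have hsplit : ∀ θ, (1 - b * cos θ) * log (1 - 2 * a * cos θ + a ^ 2) =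
      log (1 - 2 * a * cos θ + a ^ 2) - b * (cos θ * log (1 - 2 * a * cos θ + a ^ 2)) :=
    fun θ => by ring
  have hint : IntervalIntegrable (fun θ => b * (cos θ * log (1 - 2 * a * cos θ + a ^ 2)))
      volume 0 (2 * π) := ((continuous_cos.mul hlog).const_mul b).intervalIntegrable _ _
  simp_rw [hsplit]
  rw [intervalIntegral.integral_sub (hlog.intervalIntegrable _ _) hint,
    intervalIntegral.integral_const_mul, integral_log_one_sub_two_mul_cos_add_sq,
    integral_cos_mul_log_one_sub_two_mul_cos_add_sq ha,
    (posLog_eq_zero_iff _).mpr (by simpa using ha.le)]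
  ring

lemma integral_mul_log_one_sub_mul_cos_of_abs_lt {g : ℝ} (hg : |g| < 1) :
    (1 / (2 * π)) * ∫ θ in 0..2 * π, (1 - g * cos θ) * log (1 - g * cos θ) =
      1 - √(1 - g ^ 2) + log ((1 + √(1 - g ^ 2)) / 2) := by
  set s := √(1 - g ^ 2)
  have hg2 : g ^ 2 < 1 := by nlinarith [abs_nonneg g, sq_abs g]
  have hs2 : s ^ 2 = 1 - g ^ 2 := sq_sqrt (by linarith)
  have hs : 0 < s := sqrt_pos.mpr (by linarith)
  have h1s : 0 < 1 + s := by linarith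
  set a := g / (1 + s)
  have ha : |a| < 1 := by
    rw [abs_div, abs_of_pos h1s, div_lt_one h1s]
    linarith
  have hga : g * a = 1 - s := by
    rw [mul_div_assoc', div_eq_iff h1s.ne']
    nlinarith
  have hag : a * (1 + s) = g := div_mul_cancel₀ g h1s.ne'
  have hfactor : ∀ θ, 1 - g * cos θ = (1 - 2 * a * cos θ + a ^ 2) * ((1 + s) / 2) := by
    intro θ
    linear_combination (cos θ - a / 2) * hag - hga / 2
  have hlog : ∀ θ,
      log (1 - g * cos θ) = log (1 - 2 * a * cos θ + a ^ 2) + log ((1 + s) / 2) := by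
    intro θ
    rw [hfactor θ, log_mul (one_sub_two_mul_cos_add_sq_pos ha θ).ne' (by positivity)]
  have hint : IntervalIntegrable (fun θ => (1 - g * cos θ) * log (1 - 2 * a * cos θ + a ^ 2))
      volume 0 (2 * π) :=
    Continuous.intervalIntegrable (by
      fun_prop (disch := exact fun θ => (one_sub_two_mul_cos_add_sq_pos ha θ).ne')) _ _
  simp_rw [hlog, mul_add]
  rw [intervalIntegral.integral_add hint (Continuous.intervalIntegrable (by fun_prop) _ _),
    intervalIntegral.integral_mul_const, integral_one_sub_mul_cos_mul_log ha,
    integral_one_sub_mul_cos]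
  field_simp
  linear_combination hga

lemma continuous_integral_mul_log_one_sub_mul_cos :
    Continuous fun g : ℝ => ∫ θ in 0..2 * π, (1 - g * cos θ) * log (1 - g * cos θ) :=
  intervalIntegral.continuous_parametric_intervalIntegral_of_continuous'
    (f := fun g θ => (1 - g * cos θ) * log (1 - g * cos θ))
    (continuous_mul_log.comp (by fun_prop : Continuous fun p : ℝ × ℝ => 1 - p.1 * cos p.2)) _ _

lemma continuous_one_sub_sqrt_add_log :
    Continuous fun g : ℝ => 1 - √(1 - g ^ 2) + log ((1 + √(1 - g ^ 2)) / 2) :=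
  by fun_prop (disch := exact fun g => by positivity)

/-- For |g| ≤ 1, ∫₀^{2π} (1−g cos θ)·log(1−g cos θ) dθ/(2π) = 1 − √(1−g²) + log((1+√(1−g²))/2). -/
theorem statement17 (g : ℝ) (hg : |g| ≤ 1) :
    (1 / (2 * Real.pi)) * ∫ θ in (0 : ℝ)..(2 * Real.pi),
        (1 - g * Real.cos θ) * Real.log (1 - g * Real.cos θ) =
      1 - Real.sqrt (1 - g ^ 2) + Real.log ((1 + Real.sqrt (1 - g ^ 2)) / 2) := by
  have hopen : Set.EqOn
      (fun g : ℝ => (1 / (2 * π)) * ∫ θ in 0..2 * π, (1 - g * cos θ) * log (1 - g * cos θ))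
      (fun g : ℝ => 1 - √(1 - g ^ 2) + log ((1 + √(1 - g ^ 2)) / 2)) (Set.Ioo (-1) 1) :=
    fun x hx => integral_mul_log_one_sub_mul_cos_of_abs_lt (abs_lt.mpr hx)
  have hclosed := hopen.closure (continuous_const.mul continuous_integral_mul_log_one_sub_mul_cos)
    continuous_one_sub_sqrt_add_log
  rw [closure_Ioo (by norm_num)] at hclosed
  exact hclosed (abs_le.mp hg)
end

section
/- ∫₀^{2π} log((2/3)·(1−cos θ)²) · (−(4/3)·cos θ + (1/3)·cos 2θ) dθ/(2π) = 7/3. -/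
/-!
The weight `-(4/3) cos θ + (1/3) cos 2θ` has the primitive `G θ = sin θ (cos θ - 4) / 3`. Writing
`L θ = log (c (1 - cos θ)²)`, the product `L' G = (2/3)(1 + cos θ)(cos θ - 4)` is a trigonometric
polynomial, so integration by parts yields the explicit antiderivative
`L G + (7θ + sin θ (6 - cos θ)) / 3`. The boundary term `L G` is continuous on all of `ℝ`: near the
zeros of `1 - cos θ = 2 sin² (θ/2)` it behaves like `s log s` with `s = sin (θ/2)`. The integrand
is integrable because `L` is the logarithm of an analytic function.
-/

open MeasureTheory intervalIntegral Real Set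

lemma one_sub_cos_eq_two_mul_sin_half_sq (θ : ℝ) : 1 - cos θ = 2 * sin (θ / 2) ^ 2 := by
  conv_lhs => rw [← mul_div_cancel₀ θ two_ne_zero, cos_two_mul, cos_sq']
  ring

-- Valid also where `sin (θ / 2) = 0`, since then both sides vanish (with `log 0 = 0`).
lemma log_mul_one_sub_cos_sq_mul_sin_eq {c : ℝ} (hc : c ≠ 0) (θ : ℝ) :
    log (c * (1 - cos θ) ^ 2) * sin θ =
      2 * cos (θ / 2) * (log (4 * c) * sin (θ / 2) + 4 * (sin (θ / 2) * log (sin (θ / 2)))) := by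
  have hsin : sin θ = 2 * sin (θ / 2) * cos (θ / 2) := by
    rw [← sin_two_mul, mul_div_cancel₀ θ two_ne_zero]
  rcases eq_or_ne (sin (θ / 2)) 0 with hs | hs
  · simp [hsin, hs]
  rw [one_sub_cos_eq_two_mul_sin_half_sq, hsin,
    show c * (2 * sin (θ / 2) ^ 2) ^ 2 = 4 * c * sin (θ / 2) ^ 4 by ring,
    log_mul (by positivity) (pow_ne_zero 4 hs), log_pow]
  push_cast
  ring

lemma continuous_log_mul_one_sub_cos_sq_mul_sin (c : ℝ) :
    Continuous fun θ => log (c * (1 - cos θ) ^ 2) * sin θ := by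
  rcases eq_or_ne c 0 with rfl | hc
  · simpa using continuous_const
  simp_rw [log_mul_one_sub_cos_sq_mul_sin_eq hc]
  have := continuous_mul_log.comp (continuous_sin.comp (continuous_id.div_const 2))
  fun_prop

lemma intervalIntegrable_log_mul_one_sub_cos_sq_mul {g : ℝ → ℝ} (hg : Continuous g)
    (c a b : ℝ) :
    IntervalIntegrable (fun θ => log (c * (1 - cos θ) ^ 2) * g θ) volume a b := by
  have hA : AnalyticOnNhd ℝ (fun θ => c * (1 - cos θ) ^ 2) univ :=
    analyticOnNhd_const.mul ((analyticOnNhd_const.sub analyticOnNhd_cos).pow 2)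
  exact MeromorphicOn.intervalIntegrable_log (fun x _ => (hA x trivial).meromorphicAt)
    |>.mul_continuousOn hg.continuousOn

lemma hasDerivAt_log_mul_one_sub_cos_sq {c x : ℝ} (hc : c ≠ 0) (hx : cos x ≠ 1) :
    HasDerivAt (fun θ => log (c * (1 - cos θ) ^ 2)) (2 * sin x / (1 - cos x)) x := by
  have hx' : 1 - cos x ≠ 0 := sub_ne_zero.2 hx.symm
  have h := ((((hasDerivAt_cos x).const_sub 1).fun_pow 2).const_mul c).log
    (mul_ne_zero hc (pow_ne_zero 2 hx'))
  convert h using 1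
  field_simp
  ring

noncomputable def logWeightAntideriv (c θ : ℝ) : ℝ :=
  log (c * (1 - cos θ) ^ 2) * sin θ * (cos θ - 4) / 3 + (7 * θ + sin θ * (6 - cos θ)) / 3

lemma continuous_logWeightAntideriv (c : ℝ) : Continuous (logWeightAntideriv c) := by
  have := continuous_log_mul_one_sub_cos_sq_mul_sin c
  unfold logWeightAntideriv
  fun_prop

lemma hasDerivAt_logWeightAntideriv {c x : ℝ} (hc : c ≠ 0) (hx : cos x ≠ 1) :
    HasDerivAt (logWeightAntideriv c)
      (log (c * (1 - cos x) ^ 2) * (-(4 / 3) * cos x + (1 / 3) * cos (2 * x))) x := by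
  have hx' : 1 - cos x ≠ 0 := sub_ne_zero.2 hx.symm
  have h := (((hasDerivAt_log_mul_one_sub_cos_sq hc hx).mul (hasDerivAt_sin x)).mul
    ((hasDerivAt_cos x).sub_const 4) |>.div_const 3).add
    ((((hasDerivAt_id x).const_mul 7).add ((hasDerivAt_sin x).mul
      ((hasDerivAt_cos x).const_sub 6))).div_const 3)
  refine h.congr_deriv ?_
  simp only [Pi.mul_apply]
  rw [cos_two_mul]
  field_simp
  rw [sin_sq]
  ring

theorem integral_log_mul_one_sub_cos_sq_mul_weight {c : ℝ} (hc : c ≠ 0) :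
    ∫ θ in (0 : ℝ)..(2 * π), log (c * (1 - cos θ) ^ 2) *
      (-(4 / 3) * cos θ + (1 / 3) * cos (2 * θ)) = 14 * π / 3 := by
  have hcos : ∀ x ∈ Ioo 0 (2 * π), cos x ≠ 1 := fun x hx h =>
    hx.1.ne' ((cos_eq_one_iff_of_lt_of_lt (by linarith [pi_pos, hx.1]) hx.2).1 h)
  rw [integral_eq_sub_of_hasDerivAt_of_le (by positivity)
    (continuous_logWeightAntideriv c).continuousOn
    (fun x hx => hasDerivAt_logWeightAntideriv hc (hcos x hx))
    (intervalIntegrable_log_mul_one_sub_cos_sq_mul (by fun_prop) c _ _)]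
  simp [logWeightAntideriv]
  ring

/-- ∫₀^{2π} log((2/3)(1−cos θ)²)·(−(4/3)cos θ + (1/3)cos 2θ) dθ/(2π) = 7/3. -/
theorem statement19 :
    (1 / (2 * Real.pi)) * ∫ θ in (0 : ℝ)..(2 * Real.pi),
        Real.log ((2 / 3) * (1 - Real.cos θ) ^ 2) *
          (-(4 / 3) * Real.cos θ + (1 / 3) * Real.cos (2 * θ)) = 7 / 3 := by
  rw [integral_log_mul_one_sub_cos_sq_mul_weight (by norm_num)]
  field_simp
  ring
end
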